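/- arXiv:2107.09431 — 2 statements merged into one kernel-verified Lean document; each statement's English description precedes it below -/
import Mathlib

section
/- For T admitting an A-adjoint and α ∈ [0,1], ‖T‖_{A,α}² ≥ α w_A(T)² + (1−α) c_A(T^{♯A}T), where c_A denotes the A-Crawford number. -/
open scoped ComplexOrder
open ContinuousLinearMap Filter Topology

variable {H : Type*} [NormedAddCommGroup H] [InnerProductSpace ℂ H] [CompleteSpace H]

/-- The A-semi-inner product `⟨x, y⟩_A = ⟨A x, y⟩` (Mathlib convention: conjugate
linear in the first variable). -/
noncomputable def aInner (A : H →L[ℂ] H) (x y : H) : ℂ := inner ℂ (A x) y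

/-- The A-seminorm `‖x‖_A = sqrt ⟨x, x⟩_A`. -/
noncomputable def aNorm (A : H →L[ℂ] H) (x : H) : ℝ := Real.sqrt (aInner A x x).re

/-- `T` is A-bounded. -/
def ABounded (A T : H →L[ℂ] H) : Prop := ∃ c > 0, ∀ x, aNorm A (T x) ≤ c * aNorm A x

/-- The A-operator seminorm. -/
noncomputable def opNormA (A T : H →L[ℂ] H) : ℝ :=
  sSup {r | ∃ x ∈ closure (Set.range A), aNorm A x = 1 ∧ r = aNorm A (T x)}

/-- The A-numerical radius. -/
noncomputable def wA (A T : H →L[ℂ] H) : ℝ :=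
  sSup {r | ∃ x, aNorm A x = 1 ∧ r = ‖aInner A (T x) x‖}

/-- The A-Crawford number. -/
noncomputable def cA (A T : H →L[ℂ] H) : ℝ :=
  sInf {r | ∃ x, aNorm A x = 1 ∧ r = ‖aInner A (T x) x‖}

/-- The `A_α`-seminorm `‖T‖_{A,α}`. -/
noncomputable def alphaNorm (A T : H →L[ℂ] H) (α : ℝ) : ℝ :=
  sSup {r | ∃ x, aNorm A x = 1 ∧
    r = Real.sqrt (α * ‖aInner A (T x) x‖ ^ 2 + (1 - α) * aNorm A (T x) ^ 2)}

/-- `S` is the A-adjoint `T^{♯_A}` of `T`: the solution of `A X = T* A` whose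
range lies in the closure of the range of `A`. -/
def IsAAdjoint (A T S : H →L[ℂ] H) : Prop :=
  A ∘L S = (ContinuousLinearMap.adjoint T) ∘L A ∧ ∀ x, S x ∈ closure (Set.range A)

/-!
The operator `R = T^{♯A} T` is A-symmetric with `⟨R x, x⟩_A = ‖T x‖_A²`, so `c_A(R) ≤ ‖T x‖_A²`
for every A-unit vector `x`, and therefore
`α |⟨T x, x⟩_A|² + (1 - α) c_A(R) ≤ α |⟨T x, x⟩_A|² + (1 - α) ‖T x‖_A² ≤ ‖T‖_{A,α}²`;
taking the supremum over `x` gives the claim. The suprema have to be over bounded sets, i.e.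
`T` must be A-bounded. This comes from the A-symmetry of `R`: with `B = √A` and
`f k = ‖B (R^k x)‖`, Cauchy–Schwarz gives `f k ^ 2 ≤ f 0 * f (2k)`, hence
`f 1 ^ (2^n) * f 0 ≤ f 0 ^ (2^n) * f (2^n) ≤ f 0 ^ (2^n) * ‖B‖ ‖x‖ ‖R‖^(2^n)`, and letting
`n → ∞` yields `‖B (R x)‖ ≤ ‖R‖ ‖B x‖`, whence `‖T x‖_A² ≤ ‖R‖ ‖x‖_A²`.
-/

lemma le_of_pow_two_pow_le_mul_pow {a b C : ℝ} (hb : 0 ≤ b)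
    (h : ∀ n : ℕ, a ^ 2 ^ n ≤ C * b ^ 2 ^ n) : a ≤ b := by
  by_contra! hba
  have ha0 : 0 < a := hb.trans_lt hba
  have hq : Tendsto (fun n : ℕ => C * (b / a) ^ 2 ^ n) atTop (𝓝 0) := by
    simpa using ((tendsto_pow_atTop_nhds_zero_of_lt_one (div_nonneg hb ha0.le)
      ((div_lt_one ha0).2 hba)).comp (tendsto_pow_atTop_atTop_of_one_lt one_lt_two)).const_mul C
  obtain ⟨n, hn⟩ := (hq.eventually (gt_mem_nhds one_pos)).exists
  have : 1 ≤ C * (b / a) ^ 2 ^ n := by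
    rw [div_pow, ← mul_div_assoc, le_div_iff₀ (by positivity), one_mul]
    exact h n
  exact absurd hn this.not_gt

section Symmetric

variable {𝕜 E F : Type*} [RCLike 𝕜] [NormedAddCommGroup E] [NormedSpace 𝕜 E]
  [NormedAddCommGroup F] [InnerProductSpace 𝕜 F] {B : E →L[𝕜] F} {R : E →L[𝕜] E}

lemma inner_pow_apply_comm
    (hR : ∀ u v, inner 𝕜 (B (R u)) (B v) = inner 𝕜 (B u) (B (R v))) (k : ℕ) (u v : E) :
    inner 𝕜 (B ((R ^ k) u)) (B v) = inner 𝕜 (B u) (B ((R ^ k) v)) := by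
  induction k generalizing u v with
  | zero => rfl
  | succ k ih =>
    rw [pow_succ, mul_apply_eq_comp, ih, hR, ← mul_apply_eq_comp,
      (Commute.self_pow R k).eq]

lemma norm_pow_apply_sq_le
    (hR : ∀ u v, inner 𝕜 (B (R u)) (B v) = inner 𝕜 (B u) (B (R v))) (k : ℕ) (x : E) :
    ‖B ((R ^ k) x)‖ ^ 2 ≤ ‖B x‖ * ‖B ((R ^ (2 * k)) x)‖ := by
  have hsq : (‖B ((R ^ k) x)‖ : 𝕜) ^ 2 = inner 𝕜 (B x) (B ((R ^ (2 * k)) x)) := by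
    rw [← inner_self_eq_norm_sq_to_K, inner_pow_apply_comm hR, two_mul, pow_add,
      mul_apply_eq_comp]
  calc ‖B ((R ^ k) x)‖ ^ 2 = ‖inner 𝕜 (B x) (B ((R ^ (2 * k)) x))‖ := by
        rw [← hsq, norm_pow, RCLike.norm_ofReal, abs_norm]
    _ ≤ ‖B x‖ * ‖B ((R ^ (2 * k)) x)‖ := norm_inner_le_norm _ _

lemma norm_apply_pow_two_pow_mul_le
    (hR : ∀ u v, inner 𝕜 (B (R u)) (B v) = inner 𝕜 (B u) (B (R v))) (x : E) (n : ℕ) :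
    ‖B (R x)‖ ^ 2 ^ n * ‖B x‖ ≤ ‖B x‖ ^ 2 ^ n * ‖B ((R ^ 2 ^ n) x)‖ := by
  induction n with
  | zero => simp [mul_comm]
  | succ n ih =>
    set c := ‖B x‖
    set g := ‖B ((R ^ 2 ^ (n + 1)) x)‖
    have hstep : ‖B ((R ^ 2 ^ n) x)‖ ^ 2 ≤ c * g := by
      simpa [g, pow_succ, mul_comm] using norm_pow_apply_sq_le hR (2 ^ n) x
    have key : c * (‖B (R x)‖ ^ 2 ^ (n + 1) * c) ≤ c * (c ^ 2 ^ (n + 1) * g) :=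
      calc c * (‖B (R x)‖ ^ 2 ^ (n + 1) * c) = (‖B (R x)‖ ^ 2 ^ n * c) ^ 2 := by ring
        _ ≤ (c ^ 2 ^ n * ‖B ((R ^ 2 ^ n) x)‖) ^ 2 := by gcongr
        _ = c ^ 2 ^ (n + 1) * ‖B ((R ^ 2 ^ n) x)‖ ^ 2 := by ring
        _ ≤ c ^ 2 ^ (n + 1) * (c * g) := by gcongr
        _ = c * (c ^ 2 ^ (n + 1) * g) := by ring
    rcases (norm_nonneg (B x)).eq_or_lt with hc | hc
    · simp [c, ← hc]
    · exact le_of_mul_le_mul_left key hc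

lemma norm_apply_le_opNorm_mul_of_inner_symm
    (hR : ∀ u v, inner 𝕜 (B (R u)) (B v) = inner 𝕜 (B u) (B (R v))) (x : E) :
    ‖B (R x)‖ ≤ ‖R‖ * ‖B x‖ := by
  rcases (norm_nonneg (B x)).eq_or_lt with hc | hc
  · have h := norm_pow_apply_sq_le hR 1 x
    rw [← hc, zero_mul, pow_one] at h
    rw [← hc, mul_zero]
    exact pow_eq_zero_iff two_ne_zero |>.1 (h.antisymm (sq_nonneg _)) |>.le
  refine le_of_pow_two_pow_le_mul_pow (by positivity)
    (C := ‖B‖ * ‖x‖ / ‖B x‖) fun n => ?_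
  have hgrowth : ‖B ((R ^ 2 ^ n) x)‖ ≤ ‖B‖ * ‖x‖ * ‖R‖ ^ 2 ^ n :=
    calc ‖B ((R ^ 2 ^ n) x)‖ ≤ ‖B‖ * (‖R ^ 2 ^ n‖ * ‖x‖) := B.le_of_opNorm_le_of_le le_rfl
          ((R ^ 2 ^ n).le_opNorm x)
      _ ≤ ‖B‖ * (‖R‖ ^ 2 ^ n * ‖x‖) := by gcongr; exact norm_pow_le' R (Nat.two_pow_pos n)
      _ = ‖B‖ * ‖x‖ * ‖R‖ ^ 2 ^ n := by ring
  rw [div_mul_eq_mul_div, le_div_iff₀ hc, mul_pow]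
  calc ‖B (R x)‖ ^ 2 ^ n * ‖B x‖ ≤ ‖B x‖ ^ 2 ^ n * ‖B ((R ^ 2 ^ n) x)‖ :=
        norm_apply_pow_two_pow_mul_le hR x n
    _ ≤ ‖B x‖ ^ 2 ^ n * (‖B‖ * ‖x‖ * ‖R‖ ^ 2 ^ n) := by gcongr
    _ = ‖B‖ * ‖x‖ * (‖R‖ ^ 2 ^ n * ‖B x‖ ^ 2 ^ n) := by ring

end Symmetric

section ASemiInner

variable {A T S : H →L[ℂ] H}

lemma aInner_eq_inner_sqrt (hA : A.IsPositive) (x y : H) :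
    aInner A x y = inner ℂ (CFC.sqrt A x) (CFC.sqrt A y) := by
  have hA' : 0 ≤ A := (nonneg_iff_isPositive A).2 hA
  conv_lhs => rw [aInner, ← CFC.sqrt_mul_sqrt_self A hA', mul_apply_eq_comp]
  rw [← adjoint_inner_right, (IsSelfAdjoint.of_nonneg (CFC.sqrt_nonneg A)).adjoint_eq]

lemma aNorm_eq_norm_sqrt (hA : A.IsPositive) (x : H) : aNorm A x = ‖CFC.sqrt A x‖ := by
  rw [aNorm, aInner_eq_inner_sqrt hA, inner_self_eq_norm_sq_to_K]
  norm_cast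
  exact Real.sqrt_sq (norm_nonneg _)

lemma norm_aInner_le (hA : A.IsPositive) (x y : H) :
    ‖aInner A x y‖ ≤ aNorm A x * aNorm A y := by
  rw [aInner_eq_inner_sqrt hA, aNorm_eq_norm_sqrt hA, aNorm_eq_norm_sqrt hA]
  exact norm_inner_le_norm _ _

lemma aInner_comp_apply_left (hAS : A ∘L S = adjoint T ∘L A) (x y : H) :
    aInner A ((S ∘L T) x) y = aInner A (T x) (T y) := by
  rw [aInner, comp_apply, ← comp_apply A S, hAS, comp_apply, adjoint_inner_left, aInner]

lemma aInner_comp_apply_right (hA : IsSelfAdjoint A) (hAS : A ∘L S = adjoint T ∘L A)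
    (x y : H) : aInner A x ((S ∘L T) y) = aInner A (T x) (T y) := by
  rw [aInner, ← hA.adjoint_eq, adjoint_inner_left, hA.adjoint_eq, ← inner_conj_symm,
    ← aInner, aInner_comp_apply_left hAS, aInner, ← hA.adjoint_eq, adjoint_inner_left,
    inner_conj_symm, aInner, hA.adjoint_eq]

lemma norm_aInner_comp_apply_self (hA : A.IsPositive) (hAS : A ∘L S = adjoint T ∘L A)
    (x : H) : ‖aInner A ((S ∘L T) x) x‖ = aNorm A (T x) ^ 2 := by
  rw [aInner_comp_apply_left hAS, aInner_eq_inner_sqrt hA, inner_self_eq_norm_sq_to_K,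
    norm_pow, RCLike.norm_ofReal, abs_norm, aNorm_eq_norm_sqrt hA]

lemma aNorm_apply_sq_le (hA : A.IsPositive) (hAS : A ∘L S = adjoint T ∘L A) (x : H) :
    aNorm A (T x) ^ 2 ≤ ‖S ∘L T‖ * aNorm A x ^ 2 := by
  have hsymm : ∀ u v, inner ℂ (CFC.sqrt A ((S ∘L T) u)) (CFC.sqrt A v)
      = inner ℂ (CFC.sqrt A u) (CFC.sqrt A ((S ∘L T) v)) := fun u v => by
    rw [← aInner_eq_inner_sqrt hA, ← aInner_eq_inner_sqrt hA, aInner_comp_apply_left hAS,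
      aInner_comp_apply_right hA.isSelfAdjoint hAS]
  calc aNorm A (T x) ^ 2 = ‖aInner A ((S ∘L T) x) x‖ :=
        (norm_aInner_comp_apply_self hA hAS x).symm
    _ ≤ aNorm A ((S ∘L T) x) * aNorm A x := norm_aInner_le hA _ _
    _ ≤ ‖S ∘L T‖ * aNorm A x * aNorm A x := by
        refine mul_le_mul_of_nonneg_right ?_ (Real.sqrt_nonneg _)
        simpa only [aNorm_eq_norm_sqrt hA] using norm_apply_le_opNorm_mul_of_inner_symm hsymm x
    _ = ‖S ∘L T‖ * aNorm A x ^ 2 := by ring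

lemma aNorm_apply_sq_le_of_aNorm_eq_one (hA : A.IsPositive) (hAS : A ∘L S = adjoint T ∘L A)
    {x : H} (hx : aNorm A x = 1) : aNorm A (T x) ^ 2 ≤ ‖S ∘L T‖ := by
  simpa [hx] using aNorm_apply_sq_le hA hAS x

lemma norm_aInner_apply_le (hA : A.IsPositive) {x : H} (hx : aNorm A x = 1) :
    ‖aInner A (T x) x‖ ≤ aNorm A (T x) := by
  simpa [hx] using norm_aInner_le hA (T x) x

lemma cA_comp_le (hA : A.IsPositive) (hAS : A ∘L S = adjoint T ∘L A) {x : H}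
    (hx : aNorm A x = 1) : cA A (S ∘L T) ≤ aNorm A (T x) ^ 2 := by
  refine csInf_le ⟨0, ?_⟩ ⟨x, hx, (norm_aInner_comp_apply_self hA hAS x).symm⟩
  rintro _ ⟨y, -, rfl⟩
  exact norm_nonneg _

lemma le_alphaNorm_sq (hA : A.IsPositive) (hAS : A ∘L S = adjoint T ∘L A) {α : ℝ}
    (hα : 0 ≤ α) {x : H} (hx : aNorm A x = 1) :
    α * ‖aInner A (T x) x‖ ^ 2 + (1 - α) * aNorm A (T x) ^ 2 ≤ alphaNorm A T α ^ 2 := by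
  have hbdd : BddAbove {r | ∃ x, aNorm A x = 1 ∧
      r = √(α * ‖aInner A (T x) x‖ ^ 2 + (1 - α) * aNorm A (T x) ^ 2)} := by
    refine ⟨√‖S ∘L T‖, ?_⟩
    rintro _ ⟨y, hy, rfl⟩
    have hnum := norm_aInner_apply_le (T := T) hA hy
    have hden := aNorm_apply_sq_le_of_aNorm_eq_one hA hAS hy
    refine Real.sqrt_le_sqrt ?_
    nlinarith [mul_nonneg hα (sub_nonneg.2 (pow_le_pow_left₀ (norm_nonneg _) hnum 2))]
  exact (Real.sqrt_le_iff.1 (le_csSup hbdd ⟨x, hx, rfl⟩)).2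

end ASemiInner

theorem stmt8 (A T S : H →L[ℂ] H) (hA : A.IsPositive) (hT : IsAAdjoint A T S)
    (α : ℝ) (hα : α ∈ Set.Icc (0:ℝ) 1) :
    alphaNorm A T α ^ 2 ≥ α * wA A T ^ 2 + (1 - α) * cA A (S ∘L T) := by
  obtain ⟨hα0, hα1⟩ := hα
  rcases em (∃ x : H, aNorm A x = 1) with ⟨x₀, hx₀⟩ | hempty
  swap
  · -- without A-unit vectors every quantity is `sSup ∅ = sInf ∅ = 0`
    simp [alphaNorm, wA, cA, not_exists.1 hempty]
  set K := alphaNorm A T α ^ 2 - (1 - α) * cA A (S ∘L T)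
  have hpoint : ∀ x, aNorm A x = 1 → α * ‖aInner A (T x) x‖ ^ 2 ≤ K := fun x hx => by
    have := mul_le_mul_of_nonneg_left (cA_comp_le hA hT.1 hx) (sub_nonneg.2 hα1)
    linarith [le_alphaNorm_sq hA hT.1 hα0 hx]
  have hbdd : BddAbove {r | ∃ x, aNorm A x = 1 ∧ r = ‖aInner A (T x) x‖} := by
    refine ⟨√‖S ∘L T‖, ?_⟩
    rintro _ ⟨x, hx, rfl⟩
    exact (norm_aInner_apply_le hA hx).trans
      (Real.le_sqrt_of_sq_le (aNorm_apply_sq_le_of_aNorm_eq_one hA hT.1 hx))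
  have hwA : α * wA A T ^ 2 ≤ K :=
    closure_minimal (t := {r | α * r ^ 2 ≤ K}) (by rintro _ ⟨x, hx, rfl⟩; exact hpoint x hx)
      (isClosed_le (by fun_prop) continuous_const) (csSup_mem_closure ⟨_, x₀, hx₀, rfl⟩ hbdd)
  linarith
end

section
/- If T and S admit A-adjoints and commute (TS = ST), then w_A(TS) ≤ 2 w_A(T) w_A(S). -/
open scoped ComplexOrder
open ContinuousLinearMap Filter Topology

variable {H : Type*} [NormedAddCommGroup H] [InnerProductSpace ℂ H] [CompleteSpace H]

/-!
Put `X = b T + a S` and `Y = b T - a S`, where `a`, `b` bound the `A`-numerical radii of `T` and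
`S`. Since `TS = ST`, `X² - Y² = 4ab TS`; the numerical radii of `X` and `Y` are at most `2ab`,
so the power inequality `w_A(Z²) ≤ w_A(Z)²` gives `4ab w_A(TS) ≤ 2 (2ab)²`, that is
`w_A(TS) ≤ 2ab`. The power inequality for squares is the real part of the identity
`a (‖y‖²_A + ‖z‖²_A) - ⟨Uy, y⟩_A + ⟨Uz, z⟩_A = 2a (a² ‖x‖²_A - ⟨U²x, x⟩_A)` for `y, z = a x ± U x`,
after rotating `U` so that `⟨U²x, x⟩_A ≥ 0`.

The numerical radius is a supremum, so `T` must be `A`-bounded for `⟨Tx, x⟩_A ≤ w_A(T)` to hold.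
For `T` with an `A`-adjoint `T'`, `‖Tx‖²_A ≤ ‖x‖_A ‖T'Tx‖_A`, and `R = T'T` is selfadjoint for
`⟨·, ·⟩_A`. Iterating `‖Rx‖²_A ≤ ‖x‖_A ‖R²x‖_A` gives
`‖x‖_A ‖Rx‖_A^(2^n) ≤ ‖x‖_A^(2^n) ‖R^(2^n) x‖_A ≤ ‖x‖_A^(2^n) √‖A‖ ‖R‖^(2^n) ‖x‖`, and letting
`n → ∞` gives `‖Rx‖_A ≤ ‖R‖ ‖x‖_A`.
-/

lemma Complex.exists_norm_eq_one_sq_mul_eq_norm (z : ℂ) :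
    ∃ μ : ℂ, ‖μ‖ = 1 ∧ μ ^ 2 * z = ‖z‖ := by
  refine ⟨Complex.exp (↑(-(z.arg / 2)) * Complex.I), Complex.norm_exp_ofReal_mul_I _, ?_⟩
  calc _ = Complex.exp (-z.arg * Complex.I) * (‖z‖ * Complex.exp (z.arg * Complex.I)) := by
        rw [z.norm_mul_exp_arg_mul_I, ← Complex.exp_nat_mul]; push_cast; ring_nf
    _ = ‖z‖ := by
        rw [mul_left_comm, ← Complex.exp_add, neg_mul, neg_add_cancel, Complex.exp_zero, mul_one]

lemma le_of_forall_pow_le_mul_pow {a b C : ℝ} {f : ℕ → ℕ} (hf : Tendsto f atTop atTop)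
    (hb : 0 ≤ b) (h : ∀ n, a ^ f n ≤ C * b ^ f n) : a ≤ b := by
  by_contra! hba
  have ha : 0 < a := hb.trans_lt hba
  have hlim : Tendsto (fun n => C * (b / a) ^ f n) atTop (𝓝 0) := by
    simpa using ((tendsto_pow_atTop_nhds_zero_of_lt_one (div_nonneg hb ha.le)
      ((div_lt_one ha).2 hba)).comp hf).const_mul C
  obtain ⟨n, hn⟩ := (hlim.eventually (gt_mem_nhds one_pos)).exists
  have hn' : C * b ^ f n < a ^ f n := by
    rwa [div_pow, mul_div_assoc', div_lt_one (pow_pos ha _)] at hn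
  exact (h n).not_gt hn'

section SemiInnerProduct

variable {E : Type*} [NormedAddCommGroup E] [InnerProductSpace ℂ E] {A T S U : E →L[ℂ] E}

lemma aInner_conj_symm (hA : A.IsPositive) (x y : E) :
    starRingEnd ℂ (aInner A x y) = aInner A y x := by
  rw [aInner, aInner, hA.inner_left_eq_inner_right, inner_conj_symm]

lemma re_aInner_self_nonneg (hA : A.IsPositive) (x : E) : 0 ≤ (aInner A x x).re :=
  hA.re_inner_nonneg_left x

lemma aInner_smul_left (c : ℂ) (x y : E) :
    aInner A (c • x) y = starRingEnd ℂ c * aInner A x y := by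
  rw [aInner, aInner, map_smul, inner_smul_left]

lemma aInner_smul_right (c : ℂ) (x y : E) : aInner A x (c • y) = c * aInner A x y := by
  rw [aInner, aInner, inner_smul_right]

lemma norm_aInner_le_aNorm (hA : A.IsPositive) (x y : E) :
    ‖aInner A x y‖ ≤ aNorm A x * aNorm A y :=
  -- `aNorm A` is by definition the seminorm of this semi-inner product
  @InnerProductSpace.Core.norm_inner_le_norm ℂ E _ _ _
    { inner := aInner A
      conj_inner_symm x y := aInner_conj_symm hA y x
      re_inner_nonneg := re_aInner_self_nonneg hA
      add_left x y z := by simp only [aInner, map_add, inner_add_left]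
      smul_left x y r := aInner_smul_left r x y } x y

lemma aNorm_nonneg (x : E) : 0 ≤ aNorm A x := Real.sqrt_nonneg _

lemma aNorm_sq (hA : A.IsPositive) (x : E) : aNorm A x ^ 2 = (aInner A x x).re :=
  Real.sq_sqrt (re_aInner_self_nonneg hA x)

lemma aNorm_smul (hA : A.IsPositive) (c : ℂ) (x : E) :
    aNorm A (c • x) = ‖c‖ * aNorm A x := by
  rw [← Real.sqrt_sq (aNorm_nonneg _), aNorm_sq hA, aInner_smul_left, aInner_smul_right,
    ← mul_assoc, Complex.conj_mul', ← Complex.ofReal_pow, Complex.re_ofReal_mul, Real.sqrt_mul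
    (by positivity), Real.sqrt_sq (norm_nonneg c), aNorm]

lemma aNorm_le_sqrt_norm_mul_norm (x : E) : aNorm A x ≤ √‖A‖ * ‖x‖ := by
  rw [← Real.sqrt_sq (norm_nonneg x), ← Real.sqrt_mul (norm_nonneg A)]
  refine Real.sqrt_le_sqrt ((Complex.re_le_norm _).trans ?_)
  calc ‖aInner A x x‖ ≤ ‖A x‖ * ‖x‖ := norm_inner_le_norm _ _
    _ ≤ ‖A‖ * ‖x‖ * ‖x‖ := by gcongr; exact A.le_opNorm x
    _ = ‖A‖ * ‖x‖ ^ 2 := by ring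

lemma wA_nonneg : 0 ≤ wA A T :=
  Real.sSup_nonneg (by rintro _ ⟨x, -, rfl⟩; exact norm_nonneg _)

lemma wA_le_of_forall {c : ℝ} (hc : 0 ≤ c)
    (h : ∀ x, aNorm A x = 1 → ‖aInner A (T x) x‖ ≤ c) : wA A T ≤ c :=
  Real.sSup_le (by rintro _ ⟨x, hx, rfl⟩; exact h x hx) hc

lemma ABounded.norm_aInner_le_wA (hA : A.IsPositive) (hT : ABounded A T) {x : E}
    (hx : aNorm A x = 1) : ‖aInner A (T x) x‖ ≤ wA A T := by
  refine le_csSup ?_ ⟨x, hx, rfl⟩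
  obtain ⟨c, -, hc⟩ := hT
  refine ⟨c, ?_⟩
  rintro _ ⟨y, hy, rfl⟩
  calc ‖aInner A (T y) y‖ ≤ aNorm A (T y) * aNorm A y := norm_aInner_le_aNorm hA _ _
    _ ≤ c * aNorm A y * aNorm A y := mul_le_mul_of_nonneg_right (hc y) (aNorm_nonneg y)
    _ = c := by rw [hy, mul_one, mul_one]

lemma ABounded.norm_aInner_le_wA_mul (hA : A.IsPositive) (hT : ABounded A T) (x : E) :
    ‖aInner A (T x) x‖ ≤ wA A T * aNorm A x ^ 2 := by
  rcases (aNorm_nonneg (A := A) x).eq_or_lt with hx | hx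
  · simpa [← hx] using norm_aInner_le_aNorm hA (T x) x
  have hunit : aNorm A (((aNorm A x)⁻¹ : ℝ) • x) = 1 := by
    rw [← Complex.coe_smul, aNorm_smul hA, Complex.norm_real, Real.norm_of_nonneg (by positivity),
      inv_mul_cancel₀ hx.ne']
  have h := hT.norm_aInner_le_wA hA hunit
  rw [← Complex.coe_smul, map_smul, aInner_smul_left, aInner_smul_right, Complex.conj_ofReal,
    norm_mul, norm_mul, Complex.norm_real, Real.norm_of_nonneg (by positivity), ← mul_assoc,
    ← mul_inv, inv_mul_le_iff₀ (by positivity)] at h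
  linarith

lemma norm_aInner_smul_add_smul_apply_le (c d : ℂ) (x : E) :
    ‖aInner A ((c • T + d • S) x) x‖
      ≤ ‖c‖ * ‖aInner A (T x) x‖ + ‖d‖ * ‖aInner A (S x) x‖ := by
  rw [add_apply, smul_apply, smul_apply, aInner, map_add, inner_add_left, ← aInner, ← aInner,
    aInner_smul_left, aInner_smul_left]
  refine (norm_add_le _ _).trans_eq ?_
  simp only [norm_mul, Complex.norm_conj]

lemma re_aInner_apply_apply_le (hA : A.IsPositive) {a : ℝ} (ha : 0 < a)
    (hU : ∀ v, ‖aInner A (U v) v‖ ≤ a * aNorm A v ^ 2) (x : E) :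
    (aInner A (U (U x)) x).re ≤ a ^ 2 * aNorm A x ^ 2 := by
  set y := (a : ℂ) • x + U x
  set z := (a : ℂ) • x - U x
  have hid : (a : ℂ) * (aInner A y y + aInner A z z) - aInner A (U y) y + aInner A (U z) z
      = ((2 * a : ℝ) : ℂ) * (((a ^ 2 : ℝ) : ℂ) * aInner A x x - aInner A (U (U x)) x) := by
    simp only [y, z, aInner, map_add, map_sub, map_smul, inner_add_left, inner_add_right,
      inner_sub_left, inner_sub_right, inner_smul_left, inner_smul_right, Complex.conj_ofReal]
    push_cast
    ring
  have hre := congrArg Complex.re hid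
  simp only [Complex.add_re, Complex.sub_re, Complex.re_ofReal_mul, ← aNorm_sq hA] at hre
  have hy : (aInner A (U y) y).re ≤ a * aNorm A y ^ 2 := (Complex.re_le_norm _).trans (hU y)
  have hz : -(aInner A (U z) z).re ≤ a * aNorm A z ^ 2 :=
    (neg_le_abs _).trans ((Complex.abs_re_le_norm _).trans (hU z))
  have : 0 ≤ 2 * a * (a ^ 2 * aNorm A x ^ 2 - (aInner A (U (U x)) x).re) := by linarith
  linarith [(mul_nonneg_iff_of_pos_left (by positivity)).1 this]

lemma norm_aInner_apply_apply_le (hA : A.IsPositive) {a : ℝ} (ha : 0 < a)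
    (hU : ∀ v, ‖aInner A (U v) v‖ ≤ a * aNorm A v ^ 2) (x : E) :
    ‖aInner A (U (U x)) x‖ ≤ a ^ 2 * aNorm A x ^ 2 := by
  obtain ⟨μ, hμ, hμz⟩ := (aInner A (U (U x)) x).exists_norm_eq_one_sq_mul_eq_norm
  have hV : ∀ v, ‖aInner A ((starRingEnd ℂ μ • U) v) v‖ ≤ a * aNorm A v ^ 2 := fun v => by
    rw [smul_apply, aInner_smul_left, norm_mul, Complex.conj_conj, hμ, one_mul]
    exact hU v
  have h := re_aInner_apply_apply_le hA ha hV x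
  rwa [smul_apply, smul_apply, map_smul, smul_smul, aInner_smul_left, map_mul,
    Complex.conj_conj, ← sq, hμz, Complex.ofReal_re] at h

lemma norm_aInner_comp_apply_le_of_commute (hA : A.IsPositive) (hTS : T ∘L S = S ∘L T)
    {a b : ℝ} (ha : 0 < a) (hb : 0 < b)
    (hT : ∀ v, ‖aInner A (T v) v‖ ≤ a * aNorm A v ^ 2)
    (hS : ∀ v, ‖aInner A (S v) v‖ ≤ b * aNorm A v ^ 2) (x : E) :
    ‖aInner A ((T ∘L S) x) x‖ ≤ 2 * a * b * aNorm A x ^ 2 := by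
  set X := (b : ℂ) • T + (a : ℂ) • S
  set Y := (b : ℂ) • T + (-a : ℂ) • S
  have hbound : ∀ c : ℂ, ‖c‖ = a →
      ∀ v, ‖aInner A (((b : ℂ) • T + c • S) v) v‖ ≤ 2 * a * b * aNorm A v ^ 2 := by
    intro c hc v
    refine (norm_aInner_smul_add_smul_apply_le _ _ v).trans ?_
    rw [hc, Complex.norm_real, Real.norm_of_nonneg hb.le]
    nlinarith [hT v, hS v]
  have hX := norm_aInner_apply_apply_le hA (by positivity) (hbound a (by simp [ha.le])) x
  have hY := norm_aInner_apply_apply_le hA (by positivity) (hbound (-a) (by simp [ha.le])) x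
  have hdiff : X (X x) - Y (Y x) = ((4 * a * b : ℝ) : ℂ) • (T ∘L S) x := by
    have hcx : T (S x) = S (T x) := congrArg (· x) hTS
    simp only [X, Y, add_apply, smul_apply, comp_apply, map_add, map_smul, hcx]
    push_cast
    module
  have hinner : aInner A (X (X x)) x - aInner A (Y (Y x)) x
      = ((4 * a * b : ℝ) : ℂ) * aInner A ((T ∘L S) x) x := by
    rw [aInner, aInner, ← inner_sub_left, ← map_sub, hdiff, ← aInner, aInner_smul_left,
      Complex.conj_ofReal]
  have h4 : 4 * a * b * ‖aInner A ((T ∘L S) x) x‖ ≤ 2 * (2 * a * b) ^ 2 * aNorm A x ^ 2 :=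
    calc 4 * a * b * ‖aInner A ((T ∘L S) x) x‖
        = ‖aInner A (X (X x)) x - aInner A (Y (Y x)) x‖ := by
          rw [hinner, norm_mul, Complex.norm_real, Real.norm_of_nonneg (by positivity)]
      _ ≤ ‖aInner A (X (X x)) x‖ + ‖aInner A (Y (Y x)) x‖ := norm_sub_le _ _
      _ ≤ 2 * (2 * a * b) ^ 2 * aNorm A x ^ 2 := by linarith
  nlinarith [mul_pos ha hb]

theorem wA_comp_le_of_commute (hA : A.IsPositive) (hT : ABounded A T) (hS : ABounded A S)
    (hTS : T ∘L S = S ∘L T) : wA A (T ∘L S) ≤ 2 * wA A T * wA A S := by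
  have hε : ∀ ε > 0, wA A (T ∘L S) ≤ 2 * (wA A T + ε) * (wA A S + ε) := fun ε hε => by
    have hwT : 0 ≤ wA A T := wA_nonneg
    have hwS : 0 ≤ wA A S := wA_nonneg
    refine wA_le_of_forall (by positivity) fun x hx => ?_
    have hbound : ∀ {R : E →L[ℂ] E}, ABounded A R →
        ∀ v, ‖aInner A (R v) v‖ ≤ (wA A R + ε) * aNorm A v ^ 2 := fun hR v =>
      (hR.norm_aInner_le_wA_mul hA v).trans (by gcongr; linarith)
    simpa [hx] using norm_aInner_comp_apply_le_of_commute hA hTS (by positivity)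
      (by positivity) (hbound hT) (hbound hS) x
  have hlim : Tendsto (fun ε : ℝ => 2 * (wA A T + ε) * (wA A S + ε)) (𝓝[>] 0)
      (𝓝 (2 * wA A T * wA A S)) := by
    have : Continuous fun ε : ℝ => 2 * (wA A T + ε) * (wA A S + ε) := by fun_prop
    simpa using (this.tendsto 0).mono_left nhdsWithin_le_nhds
  exact ge_of_tendsto hlim (eventually_nhdsWithin_of_forall fun ε hε' => hε ε hε')

end SemiInnerProduct

section AAdjoint

variable {E : Type*} [NormedAddCommGroup E] [InnerProductSpace ℂ E] [CompleteSpace E]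
  {A R T T' : E →L[ℂ] E}

def IsASelfAdjoint (A R : E →L[ℂ] E) : Prop := A * R = star R * A

lemma IsASelfAdjoint.aInner_apply_left (hR : IsASelfAdjoint A R) (x y : E) :
    aInner A (R x) y = aInner A x (R y) := by
  rw [aInner, aInner, ← mul_apply_eq_comp, hR, mul_apply_eq_comp,
    star_eq_adjoint, adjoint_inner_left]

lemma IsASelfAdjoint.mul_self (hR : IsASelfAdjoint A R) : IsASelfAdjoint A (R * R) := by
  rw [IsASelfAdjoint, star_mul, ← mul_assoc, hR, mul_assoc, hR, mul_assoc]

lemma IsASelfAdjoint.aNorm_apply_sq_le (hA : A.IsPositive) (hR : IsASelfAdjoint A R) (x : E) :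
    aNorm A (R x) ^ 2 ≤ aNorm A x * aNorm A (R (R x)) := by
  rw [aNorm_sq hA, hR.aInner_apply_left]
  exact (Complex.re_le_norm _).trans (norm_aInner_le_aNorm hA _ _)

lemma IsASelfAdjoint.aNorm_mul_aNorm_apply_pow_le (hA : A.IsPositive) (hR : IsASelfAdjoint A R)
    (n : ℕ) (x : E) :
    aNorm A x * aNorm A (R x) ^ 2 ^ n ≤ aNorm A x ^ 2 ^ n * aNorm A ((R ^ 2 ^ n) x) := by
  induction n generalizing R with
  | zero => simp
  | succ n ih =>
    have hx := aNorm_nonneg (A := A) x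
    calc aNorm A x * aNorm A (R x) ^ 2 ^ (n + 1)
        = aNorm A x * (aNorm A (R x) ^ 2) ^ 2 ^ n := by rw [pow_succ', pow_mul]
      _ ≤ aNorm A x * (aNorm A x * aNorm A ((R * R) x)) ^ 2 ^ n := by
          gcongr; exact hR.aNorm_apply_sq_le hA x
      _ = aNorm A x ^ 2 ^ n * (aNorm A x * aNorm A ((R * R) x) ^ 2 ^ n) := by ring
      _ ≤ aNorm A x ^ 2 ^ n * (aNorm A x ^ 2 ^ n * aNorm A (((R * R) ^ 2 ^ n) x)) :=
          mul_le_mul_of_nonneg_left (ih hR.mul_self) (by positivity)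
      _ = aNorm A x ^ 2 ^ (n + 1) * aNorm A ((R ^ 2 ^ (n + 1)) x) := by
          rw [← sq, ← pow_mul, ← pow_succ', ← mul_assoc, ← pow_two, ← pow_mul, ← pow_succ]

lemma IsASelfAdjoint.aNorm_apply_le (hA : A.IsPositive) (hR : IsASelfAdjoint A R) (x : E) :
    aNorm A (R x) ≤ ‖R‖ * aNorm A x := by
  rcases (aNorm_nonneg (A := A) x).eq_or_lt with hx | hx
  · have := hR.aNorm_apply_sq_le hA x
    rw [← hx, zero_mul] at this
    rw [← hx, mul_zero]
    nlinarith [aNorm_nonneg (A := A) (R x)]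
  refine le_of_forall_pow_le_mul_pow (C := √‖A‖ * ‖x‖ / aNorm A x)
    (tendsto_pow_atTop_atTop_of_one_lt one_lt_two) (by positivity) fun n => ?_
  have hpow : aNorm A ((R ^ 2 ^ n) x) ≤ √‖A‖ * ‖x‖ * ‖R‖ ^ 2 ^ n :=
    calc aNorm A ((R ^ 2 ^ n) x) ≤ √‖A‖ * ‖(R ^ 2 ^ n) x‖ := aNorm_le_sqrt_norm_mul_norm _
      _ ≤ √‖A‖ * (‖R‖ ^ 2 ^ n * ‖x‖) := by
          gcongr
          exact ((R ^ 2 ^ n).le_opNorm x).trans (by gcongr; exact norm_pow_le' R (by positivity))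
      _ = √‖A‖ * ‖x‖ * ‖R‖ ^ 2 ^ n := by ring
  rw [div_mul_eq_mul_div, le_div_iff₀ hx, mul_pow]
  calc aNorm A (R x) ^ 2 ^ n * aNorm A x
      ≤ aNorm A x ^ 2 ^ n * aNorm A ((R ^ 2 ^ n) x) := by
        rw [mul_comm]; exact hR.aNorm_mul_aNorm_apply_pow_le hA n x
    _ ≤ aNorm A x ^ 2 ^ n * (√‖A‖ * ‖x‖ * ‖R‖ ^ 2 ^ n) := by gcongr
    _ = √‖A‖ * ‖x‖ * (‖R‖ ^ 2 ^ n * aNorm A x ^ 2 ^ n) := by ring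

lemma IsAAdjoint.star_mul_eq (hA : A.IsPositive) (h : IsAAdjoint A T T') :
    star T' * A = A * T := by
  have h1 : A * T' = star T * A := h.1
  simpa [star_mul, hA.isSelfAdjoint.star_eq] using congrArg star h1

lemma IsAAdjoint.isASelfAdjoint_mul (hA : A.IsPositive) (h : IsAAdjoint A T T') :
    IsASelfAdjoint A (T' * T) := by
  have hT' : A * T' = star T * A := h.1
  rw [IsASelfAdjoint, star_mul, ← mul_assoc, hT', mul_assoc, ← h.star_mul_eq hA, mul_assoc]

lemma IsAAdjoint.aBounded (hA : A.IsPositive) (h : IsAAdjoint A T T') : ABounded A T := by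
  refine ⟨√‖T' * T‖ + 1, by positivity, fun x => ?_⟩
  have hsq : aNorm A (T x) ^ 2 ≤ (√‖T' * T‖ * aNorm A x) ^ 2 :=
    calc aNorm A (T x) ^ 2 = (aInner A x ((T' * T) x)).re := by
          rw [aNorm_sq hA, aInner, aInner, ← mul_apply_eq_comp, ← h.star_mul_eq hA,
            mul_apply_eq_comp, star_eq_adjoint, adjoint_inner_left, mul_apply_eq_comp]
      _ ≤ aNorm A x * aNorm A ((T' * T) x) :=
          (Complex.re_le_norm _).trans (norm_aInner_le_aNorm hA _ _)
      _ ≤ aNorm A x * (‖T' * T‖ * aNorm A x) :=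
          mul_le_mul_of_nonneg_left ((h.isASelfAdjoint_mul hA).aNorm_apply_le hA x)
            (aNorm_nonneg x)
      _ = (√‖T' * T‖ * aNorm A x) ^ 2 := by
          rw [mul_pow, Real.sq_sqrt (norm_nonneg _)]; ring
  calc aNorm A (T x) ≤ √‖T' * T‖ * aNorm A x :=
        (pow_le_pow_iff_left₀ (aNorm_nonneg _) (mul_nonneg (Real.sqrt_nonneg _) (aNorm_nonneg x))
          two_ne_zero).1 hsq
    _ ≤ (√‖T' * T‖ + 1) * aNorm A x :=
        mul_le_mul_of_nonneg_right (by linarith) (aNorm_nonneg x)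

end AAdjoint

theorem stmt13 (A T S : H →L[ℂ] H) (hA : A.IsPositive)
    (hT : ∃ T', IsAAdjoint A T T') (hS : ∃ S', IsAAdjoint A S S')
    (hcomm : T ∘L S = S ∘L T) :
    wA A (T ∘L S) ≤ 2 * wA A T * wA A S := by
  obtain ⟨T', hT'⟩ := hT
  obtain ⟨S', hS'⟩ := hS
  exact wA_comp_le_of_commute hA (hT'.aBounded hA) (hS'.aBounded hA) hcomm
end
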